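/- Let S be a real-valued function on pairs and singletons of sites satisfying: (i) 0 ≤ S_z ≤ ln 2 for every singleton z, (ii) subadditivity S_{xy} ≤ S_x + S_y for all pairs, and (iii) strong subadditivity S_x + S_y ≤ S_{xz} + S_{zy} for all x, y, z. Define the mutual information M_{xy} = S_x + S_y − S_{xy} and the distance D_{xy} = 2·ln 2 − M_{xy}. Then D satisfies the triangle inequality: D_{xy} ≤ D_{xz} + D_{zy} for all sites x, y, z. -/
import Mathlib

/-- The inverse-mutual-information distance `D x y = 2 ln 2 − (S x + S y − S xy)`
satisfies the triangle inequality, given entropy bounds, subadditivity and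
strong subadditivity. -/
theorem mi_distance_triangle {α : Type*} (S1 : α → ℝ) (S2 : α → α → ℝ)
    (hsymm : ∀ x y, S2 x y = S2 y x)
    (hbound : ∀ z, 0 ≤ S1 z ∧ S1 z ≤ Real.log 2)
    (hsub : ∀ x y, S2 x y ≤ S1 x + S1 y)
    (hssa : ∀ x y z, S1 x + S1 y ≤ S2 x z + S2 z y)
    (M : α → α → ℝ) (hM : ∀ x y, M x y = S1 x + S1 y - S2 x y)
    (D : α → α → ℝ) (hD : ∀ x y, D x y = 2 * Real.log 2 - M x y) :
    ∀ x y z, D x y ≤ D x z + D z y := by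
  intro x y z
  have h1 := (hbound z).2
  have h2 := hsub x y
  have h3 := hssa x y z
  rw [hD, hD, hD, hM, hM, hM]
  linarith
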